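/- Let N ≥ 1, let Q be a real symmetric N×N matrix, q, d ∈ ℝ^N, γ, c, b ∈ ℝ, α₁, α₂ ∈ ℝ with α₂ − α₁ ≠ 2, and ω ∈ ℝ^N. Set β := (α₁−α₂)/2. Let ℒ be the operator with parameters (Q, q, γ, d, c, b, α₁, α₂), and let ℒ̃ be the operator of the same form with parameters Q̃ := Q + 2(β+1) q⊗ω + γ(β+1)² ω⊗ω, q̃ := q + γ(β+1)ω, d̃ := d + (c+γβ)(β+1)ω, and the same γ, c, b, α₁, α₂, where Tr((q⊗ω) D²_x u) := (D²_x u · ω)·q. Then for every u ∈ C²(ℝ^{N+1}_+) and every point of ℝ^{N+1}_+ one has ℒ(S_{β,ω}u) = S_{β,ω}(ℒ̃u). -/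

import Mathlib

open MeasureTheory Real

noncomputable section

/-- Points of `ℝ^{N+1} = ℝ^N × ℝ`. -/
abbrev Pt (N : ℕ) := (Fin N → ℝ) × ℝ

/-- Directional (partial) derivative of `u` at `z` in the direction `v`. -/
def pd {N : ℕ} (v : Pt N) (u : Pt N → ℝ) (z : Pt N) : ℝ := fderiv ℝ u z v

/-- The unit vector in the `i`-th `x`-direction. -/
def ex {N : ℕ} (i : Fin N) : Pt N := (Pi.single i 1, 0)

/-- The unit vector in the `y`-direction. -/
def ey {N : ℕ} : Pt N := (0, 1)

/-- The map `S_{β,ω} u (x, y) = u(x + ω y^{β+1}, y)`. -/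
def Sbo {N : ℕ} (β : ℝ) (ω : Fin N → ℝ) (u : Pt N → ℝ) : Pt N → ℝ := fun z =>
  u (z.1 + z.2 ^ (β + 1) • ω, z.2)

/-- The degenerate operator
`ℒu = y^{α₁} Tr(Q D²_x u) + 2 y^{(α₁+α₂)/2} q·∇_x(∂_y u) + γ y^{α₂} ∂²_{yy} u
      + y^{(α₁+α₂)/2−1} d·∇_x u + c y^{α₂−1} ∂_y u − b y^{α₂−2} u`. -/
def opL {N : ℕ} (Q : Matrix (Fin N) (Fin N) ℝ) (q d : Fin N → ℝ) (γ c b α₁ α₂ : ℝ)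
    (u : Pt N → ℝ) (z : Pt N) : ℝ :=
  z.2 ^ α₁ * (∑ i, ∑ j, Q i j * pd (ex i) (pd (ex j) u) z)
    + 2 * z.2 ^ ((α₁ + α₂) / 2) * (∑ i, q i * pd (ex i) (pd ey u) z)
    + γ * z.2 ^ α₂ * pd ey (pd ey u) z
    + z.2 ^ ((α₁ + α₂) / 2 - 1) * (∑ i, d i * pd (ex i) u z)
    + c * z.2 ^ (α₂ - 1) * pd ey u z
    - b * z.2 ^ (α₂ - 2) * u z

/-!
`S_{β,ω} u = u ∘ shear` with `shear (x, y) = (x + y^{β+1} ω, y)`. The derivative of the shear fixes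
the `x`-directions and sends `∂_y` to `∂_y + (β+1) y^β ∂_ω`, and its second derivative adds
`(β+1) β y^{β-1} ∂_ω u` to `∂²_{yy}`. Since `β = (α₁-α₂)/2`, each new term of `ℒ(S_{β,ω} u)` carries
the same power of `y` as a term of `ℒ` and is a derivative along `(ω, 0)`; `Q̃`, `q̃`, `d̃` are exactly
these terms regrouped.
-/

open ContinuousLinearMap Filter Topology

section Shear

variable {N : ℕ}

def shear (β : ℝ) (ω : Fin N → ℝ) (z : Pt N) : Pt N := (z.1 + z.2 ^ (β + 1) • ω, z.2)

def shearDeriv (β : ℝ) (ω : Fin N → ℝ) (y : ℝ) : Pt N →L[ℝ] Pt N :=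
  ContinuousLinearMap.id ℝ (Pt N) + ((β + 1) * y ^ β) • (snd ℝ _ ℝ).smulRight (inl ℝ _ ℝ ω)

variable {β y : ℝ} {ω : Fin N → ℝ}

theorem Sbo_apply (f : Pt N → ℝ) (z : Pt N) : Sbo β ω f z = f (shear β ω z) := rfl

theorem shear_snd (z : Pt N) : (shear β ω z).2 = z.2 := rfl

theorem ex_snd (i : Fin N) : (ex i : Pt N).2 = 0 := rfl

theorem ey_snd : (ey : Pt N).2 = 1 := rfl

theorem shearDeriv_apply (v : Pt N) :
    shearDeriv β ω y v = v + ((β + 1) * y ^ β * v.2) • inl ℝ _ ℝ ω := by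
  simp [shearDeriv, smul_smul, mul_comm]

theorem shearDeriv_ex (i : Fin N) : shearDeriv β ω y (ex i) = ex i := by
  simp [shearDeriv_apply, ex]

theorem shearDeriv_ey : shearDeriv β ω y ey = ey + ((β + 1) * y ^ β) • inl ℝ _ ℝ ω := by
  simp [shearDeriv_apply, ey]

theorem hasFDerivAt_shear {z : Pt N} (hz : 0 < z.2) :
    HasFDerivAt (shear β ω) (shearDeriv β ω z.2) z := by
  have hpow : HasDerivAt (fun t : ℝ => t ^ (β + 1)) ((β + 1) * z.2 ^ β) z.2 := by
    simpa using Real.hasDerivAt_rpow_const (p := β + 1) (Or.inl hz.ne')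
  have hshear : shear β ω = fun p => p + p.2 ^ (β + 1) • inl ℝ _ ℝ ω := by
    ext p <;> simp [shear]
  rw [hshear]
  refine ((hasFDerivAt_id z).add ((hpow.comp_hasFDerivAt z
    (hasFDerivAt_snd (𝕜 := ℝ) (p := z))).smul_const _)).congr_fderiv (ext fun v => ?_)
  simp [shearDeriv_apply, mul_comm]

theorem pd_Sbo {f : Pt N → ℝ} {z : Pt N} (hz : 0 < z.2)
    (hf : DifferentiableAt ℝ f (shear β ω z)) (v : Pt N) :
    pd v (Sbo β ω f) z = fderiv ℝ f (shear β ω z) (shearDeriv β ω z.2 v) := by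
  have h : HasFDerivAt (Sbo β ω f) ((fderiv ℝ f (shear β ω z)).comp (shearDeriv β ω z.2)) z :=
    hf.hasFDerivAt.comp z (hasFDerivAt_shear hz)
  rw [pd, h.fderiv]
  rfl

theorem pd_pd_eq_fderiv_fderiv {f : Pt N → ℝ} {x : Pt N} (hf : ContDiffAt ℝ 2 f x)
    (v w : Pt N) : pd v (pd w f) x = fderiv ℝ (fderiv ℝ f) x v w := by
  have hH := ((hf.fderiv_right (m := 1) le_rfl).differentiableAt one_ne_zero).hasFDerivAt
  have h : HasFDerivAt (pd w f) ((apply ℝ ℝ w).comp (fderiv ℝ (fderiv ℝ f) x)) x :=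
    (apply ℝ ℝ w).hasFDerivAt.comp x hH
  rw [pd, h.fderiv]
  rfl

theorem pd_pd_Sbo {u : Pt N → ℝ} {z : Pt N} (hz : 0 < z.2)
    (hu : ContDiffAt ℝ 2 u (shear β ω z)) (v w : Pt N) :
    pd v (pd w (Sbo β ω u)) z
      = fderiv ℝ (fderiv ℝ u) (shear β ω z) (shearDeriv β ω z.2 v) (shearDeriv β ω z.2 w)
        + (β + 1) * β * z.2 ^ (β - 1) * v.2 * w.2 * fderiv ℝ u (shear β ω z) (inl ℝ _ ℝ ω) := by
  have hpos : ∀ᶠ p in 𝓝 z, 0 < p.2 := (isOpen_lt continuous_const continuous_snd).mem_nhds hz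
  have hdiff : ∀ᶠ p in 𝓝 z, DifferentiableAt ℝ u (shear β ω p) :=
    (hasFDerivAt_shear hz).continuousAt.eventually
      (hu.eventually (by simp) |>.mono fun _ h => h.differentiableAt two_ne_zero)
  have hfirst : pd w (Sbo β ω u) =ᶠ[𝓝 z]
      fun p => fderiv ℝ u (shear β ω p) (shearDeriv β ω p.2 w) := by
    filter_upwards [hpos, hdiff] with p hp hpu using pd_Sbo hp hpu w
  have hH := ((hu.fderiv_right (m := 1) le_rfl).differentiableAt one_ne_zero).hasFDerivAt.comp z
    (hasFDerivAt_shear hz)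
  have hpow : HasDerivAt (fun t : ℝ => (β + 1) * t ^ β * w.2)
      ((β + 1) * (β * z.2 ^ (β - 1)) * w.2) z.2 :=
    ((Real.hasDerivAt_rpow_const (p := β) (Or.inl hz.ne')).const_mul (β + 1)).mul_const w.2
  have hdir : HasFDerivAt (fun p : Pt N => shearDeriv β ω p.2 w)
      ((((β + 1) * (β * z.2 ^ (β - 1)) * w.2) • snd ℝ _ ℝ).smulRight (inl ℝ _ ℝ ω)) z := by
    simp only [shearDeriv_apply]
    exact ((hpow.comp_hasFDerivAt z (hasFDerivAt_snd (𝕜 := ℝ) (p := z))).smul_const _).const_add w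
  have hsecond : HasFDerivAt (fun p => fderiv ℝ u (shear β ω p) (shearDeriv β ω p.2 w)) _ z :=
    hH.clm_apply hdir
  rw [pd, hfirst.fderiv_eq, hsecond.fderiv]
  simp only [add_apply, comp_apply, Function.comp_apply, smulRight_apply, smul_apply, flip_apply,
    map_smul, smul_eq_mul, coe_snd']
  ring

theorem sum_mul_apply_ex (φ : Pt N →L[ℝ] ℝ) (v : Fin N → ℝ) :
    ∑ i, v i * φ (ex i) = φ (inl ℝ _ ℝ v) := by
  have hv : inl ℝ _ ℝ v = ∑ i, v i • (ex i : Pt N) := by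
    ext j <;> simp [ex, Prod.fst_sum, Prod.snd_sum, Finset.sum_apply, Pi.single_apply]
  simp [hv]

theorem sum_mul_apply_ex_apply (H : Pt N →L[ℝ] Pt N →L[ℝ] ℝ) (v : Fin N → ℝ) (w : Pt N) :
    ∑ i, v i * H (ex i) w = H (inl ℝ _ ℝ v) w :=
  sum_mul_apply_ex (H.flip w) v

end Shear

theorem statement13_general (N : ℕ)
    (Q : Matrix (Fin N) (Fin N) ℝ) (q d : Fin N → ℝ)
    (γ c b α₁ α₂ : ℝ) (ω : Fin N → ℝ)
    (β : ℝ) (hβ : β = (α₁ - α₂) / 2)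
    (u : Pt N → ℝ) (hu : ContDiffOn ℝ 2 u {z : Pt N | 0 < z.2}) :
    ∀ z : Pt N, 0 < z.2 →
      opL Q q d γ c b α₁ α₂ (Sbo β ω u) z
        = Sbo β ω
            (opL
              (Matrix.of fun i j =>
                Q i j + 2 * (β + 1) * (q i * ω j) + γ * (β + 1) ^ 2 * (ω i * ω j))
              (fun i => q i + γ * (β + 1) * ω i)
              (fun i => d i + (c + γ * β) * (β + 1) * ω i)
              γ c b α₁ α₂ u) z := by
  intro z hz
  have hu' : ContDiffAt ℝ 2 u (shear β ω z) :=
    hu.contDiffAt ((isOpen_lt continuous_const continuous_snd).mem_nhds hz)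
  have hsymm := hu'.isSymmSndFDerivAt (by simp)
  obtain rfl : α₁ = α₂ + β + β := by rw [hβ]; ring
  simp only [opL, pd_pd_Sbo hz hu', pd_Sbo hz (hu'.differentiableAt two_ne_zero),
    pd_pd_eq_fderiv_fderiv hu', Sbo_apply, shear_snd, shearDeriv_ex, Matrix.of_apply]
  -- every sum `∑ i, vᵢ * (…) (ex i)` becomes a derivative along `(v, 0)`
  simp only [pd, ex_snd, ey_snd, mul_zero, zero_mul, add_zero, mul_one, add_mul, mul_add,
    Finset.sum_add_distrib, mul_assoc, ← Finset.mul_sum, sum_mul_apply_ex, sum_mul_apply_ex_apply]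
  simp only [shearDeriv_ey, map_add, map_smul, add_apply, smul_apply, smul_eq_mul, hsymm.eq ey]
  rw [show (α₂ + β + β + α₂) / 2 = α₂ + β by ring]
  simp only [Real.rpow_add hz, Real.rpow_sub_one hz.ne']
  ring

/-- With `β = (α₁−α₂)/2`,
`ℒ(S_{β,ω} u) = S_{β,ω}(ℒ̃ u)` where `ℒ̃` has parameters
`Q̃ = Q + 2(β+1) q⊗ω + γ(β+1)² ω⊗ω`, `q̃ = q + γ(β+1)ω`,
`d̃ = d + (c+γβ)(β+1)ω`, and the same `γ, c, b, α₁, α₂`. -/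
theorem statement13 (N : ℕ) (hN : 1 ≤ N)
    (Q : Matrix (Fin N) (Fin N) ℝ) (hQ : Q.IsSymm) (q d : Fin N → ℝ)
    (γ c b α₁ α₂ : ℝ) (hα : α₂ - α₁ ≠ 2) (ω : Fin N → ℝ)
    (β : ℝ) (hβ : β = (α₁ - α₂) / 2)
    (u : Pt N → ℝ) (hu : ContDiffOn ℝ 2 u {z : Pt N | 0 < z.2}) :
    ∀ z : Pt N, 0 < z.2 →
      opL Q q d γ c b α₁ α₂ (Sbo β ω u) z
        = Sbo β ω
            (opL
              (Matrix.of fun i j =>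
                Q i j + 2 * (β + 1) * (q i * ω j) + γ * (β + 1) ^ 2 * (ω i * ω j))
              (fun i => q i + γ * (β + 1) * ω i)
              (fun i => d i + (c + γ * β) * (β + 1) * ω i)
              γ c b α₁ α₂ u) z :=
  statement13_general N Q q d γ c b α₁ α₂ ω β hβ u hu
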